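/- arXiv:2502.12818 — 4 statements merged into one kernel-verified Lean document; each statement's English description precedes it below -/
import Mathlib

section
/- Let n ≥ 2, 0 ≤ λ ≤ 1, and let χ(λ) = λ(|Ψ_n⟩⟨Ψ_n| − (I_n/n) ⊗ (I_n/n)) be the correlation part of the mixture of the maximally entangled state and the maximally mixed state on ℂ^n ⊗ ℂ^n. A density matrix ρ on ℂ^n satisfies that ρ ⊗ (I_n/n) + χ(λ) is positive semidefinite if and only if there exists a density matrix σ on ℂ^n such that ρ = λ·(I_n/n) + (1−λ)·σ. -/
open Matrix
open scoped Kronecker ComplexOrder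

/-- The maximally entangled state `Ψ_n = (1/√n) Σ_k e_k ⊗ e_k` on `ℂ^n ⊗ ℂ^n`. -/
noncomputable def maxEntVec (n : ℕ) : Fin n × Fin n → ℂ :=
  fun p => if p.1 = p.2 then ((Real.sqrt n : ℂ))⁻¹ else 0

/-- The rank-one projection `|Ψ_n⟩⟨Ψ_n|`. -/
noncomputable def maxEntProj (n : ℕ) : Matrix (Fin n × Fin n) (Fin n × Fin n) ℂ :=
  Matrix.vecMulVec (maxEntVec n) (star (maxEntVec n))

/-- The maximally mixed state `I_n / n`. -/
noncomputable def maxMixed (n : ℕ) : Matrix (Fin n) (Fin n) ℂ := (n : ℂ)⁻¹ • 1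

/-! Testing positivity of `ρ ⊗ I/n + χ(λ)` on product vectors `v ⊗ w` with `∑ k, v k * w k = 0`
(which exist for `n ≥ 2` and are orthogonal to `Ψ_n`) leaves `⟨w, w⟩/n · ⟨v, (ρ - λ I/n) v⟩ ≥ 0`,
so `ρ - λ I/n` is positive semidefinite of trace `1 - λ`, i.e. `ρ = λ I/n + (1 - λ) σ` for a
density matrix `σ`. Conversely `ρ ⊗ I/n + χ(λ) = (ρ - λ I/n) ⊗ I/n + λ |Ψ_n⟩⟨Ψ_n|`. -/

section KroneckerVec

variable {R k l m n : Type*}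

def kroneckerVec [Mul R] (v : l → R) (w : m → R) : l × m → R := fun p => v p.1 * w p.2

theorem star_kroneckerVec [CommSemiring R] [StarRing R] (v : l → R) (w : m → R) :
    star (kroneckerVec v w) = kroneckerVec (star v) (star w) := by
  ext p
  simp [kroneckerVec]

theorem kroneckerVec_dotProduct_kroneckerVec [CommSemiring R] [Fintype l] [Fintype m]
    (a c : l → R) (b d : m → R) :
    kroneckerVec a b ⬝ᵥ kroneckerVec c d = (a ⬝ᵥ c) * (b ⬝ᵥ d) := by
  simp only [kroneckerVec, dotProduct, Fintype.sum_prod_type, Finset.sum_mul_sum]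
  exact Finset.sum_congr rfl fun i _ => Finset.sum_congr rfl fun j _ => by ring

theorem kronecker_mulVec_kroneckerVec [CommSemiring R] [Fintype l] [Fintype m]
    (A : Matrix k l R) (B : Matrix n m R) (v : l → R) (w : m → R) :
    (A ⊗ₖ B) *ᵥ kroneckerVec v w = kroneckerVec (A *ᵥ v) (B *ᵥ w) := by
  ext p
  simp only [kroneckerVec, mulVec, dotProduct, kroneckerMap_apply, Fintype.sum_prod_type,
    Finset.sum_mul_sum]
  exact Finset.sum_congr rfl fun i _ => Finset.sum_congr rfl fun j _ => by ring

theorem star_kroneckerVec_dotProduct_kronecker_mulVec [CommSemiring R] [StarRing R]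
    [Fintype l] [Fintype m] (A : Matrix l l R) (B : Matrix m m R) (v : l → R) (w : m → R) :
    star (kroneckerVec v w) ⬝ᵥ (A ⊗ₖ B) *ᵥ kroneckerVec v w
      = (star v ⬝ᵥ A *ᵥ v) * (star w ⬝ᵥ B *ᵥ w) := by
  rw [kronecker_mulVec_kroneckerVec, star_kroneckerVec, kroneckerVec_dotProduct_kroneckerVec]

end KroneckerVec

theorem Matrix.PosSemidef.posSemidef_sub_smul_iff_exists_eq {m : Type*} [Fintype m]
    {ρ τ : Matrix m m ℂ} (hρ : ρ.PosSemidef) (hρtr : ρ.trace = 1) (hτtr : τ.trace = 1)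
    {lam : ℝ} (hlam1 : lam ≤ 1) :
    (ρ - (lam : ℂ) • τ).PosSemidef ↔
      ∃ σ : Matrix m m ℂ, σ.PosSemidef ∧ σ.trace = 1 ∧
        ρ = (lam : ℂ) • τ + ((1 - lam : ℝ) : ℂ) • σ := by
  constructor
  · intro h
    rcases hlam1.lt_or_eq with hlt | rfl
    · refine ⟨((1 - lam)⁻¹ : ℝ) • (ρ - (lam : ℂ) • τ), h.smul (inv_nonneg.mpr (by linarith)),
        ?_, ?_⟩
      · have hne : (1 : ℂ) - lam ≠ 0 := by exact_mod_cast (by linarith : 1 - lam ≠ 0)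
        rw [trace_smul, trace_sub, trace_smul, hρtr, hτtr, smul_eq_mul, mul_one,
          ← Complex.coe_smul, smul_eq_mul, Complex.ofReal_inv, Complex.ofReal_sub,
          Complex.ofReal_one]
        exact inv_mul_cancel₀ hne
      · rw [← Complex.coe_smul, smul_smul, ← Complex.ofReal_mul,
          mul_inv_cancel₀ (by linarith), Complex.ofReal_one, one_smul, add_sub_cancel]
    · have hρτ : ρ = τ := sub_eq_zero.mp <| by
        simpa using (h.trace_eq_zero_iff).mp (by simp [hρtr, hτtr])
      exact ⟨ρ, hρ, hρtr, by simp [hρτ]⟩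
  · rintro ⟨σ, hσ, -, rfl⟩
    rw [add_sub_cancel_left, Complex.coe_smul]
    exact hσ.smul (by linarith)

theorem maxEntProj_mulVec_kroneckerVec_eq_zero {n : ℕ} {v w : Fin n → ℂ} (h : v ⬝ᵥ w = 0) :
    maxEntProj n *ᵥ kroneckerVec v w = 0 := by
  have hΨ : star (maxEntVec n) ⬝ᵥ kroneckerVec v w = 0 := by
    simp only [dotProduct, kroneckerVec, maxEntVec, Pi.star_apply, Fintype.sum_prod_type,
      apply_ite (star : ℂ → ℂ), star_zero, ite_mul, zero_mul, Finset.sum_ite_eq,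
      Finset.mem_univ, if_true, ← Finset.mul_sum]
    rw [← dotProduct, h, mul_zero]
  rw [maxEntProj, vecMulVec_mulVec, hΨ, MulOpposite.op_zero, zero_smul]

theorem posSemidef_maxEntProj (n : ℕ) : (maxEntProj n).PosSemidef :=
  posSemidef_vecMulVec_self_star _

theorem posSemidef_maxMixed (n : ℕ) : (maxMixed n).PosSemidef :=
  PosSemidef.one.smul (by positivity)

theorem trace_maxMixed {n : ℕ} (hn : n ≠ 0) : (maxMixed n).trace = 1 := by
  simp [maxMixed, hn]

theorem star_dotProduct_maxMixed_mulVec (n : ℕ) (x : Fin n → ℂ) :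
    star x ⬝ᵥ maxMixed n *ᵥ x = (n : ℂ)⁻¹ * (star x ⬝ᵥ x) := by
  rw [maxMixed, smul_mulVec, one_mulVec, dotProduct_smul, smul_eq_mul]

theorem posSemidef_sub_smul_maxMixed_of_posSemidef {n : ℕ} (hn : 2 ≤ n) {lam : ℝ}
    {ρ : Matrix (Fin n) (Fin n) ℂ} (hρ : ρ.IsHermitian)
    (h : (ρ ⊗ₖ maxMixed n + (lam : ℂ) • (maxEntProj n - maxMixed n ⊗ₖ maxMixed n)).PosSemidef) :
    (ρ - (lam : ℂ) • maxMixed n).PosSemidef := by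
  have : Nontrivial (Fin n) := Fin.nontrivial_iff_two_le.mpr hn
  refine posSemidef_iff_dotProduct_mulVec.mpr ⟨hρ.sub ?_, fun v => ?_⟩
  · exact (posSemidef_maxMixed n).isHermitian.smul (Complex.conj_ofReal lam)
  obtain ⟨w, hw0, hwv⟩ := exists_ne_zero_dotProduct_eq_zero v
  have hpos : 0 < (n : ℂ)⁻¹ * (star w ⬝ᵥ w) :=
    mul_pos (by positivity) (dotProduct_star_self_pos_iff.mpr hw0)
  have hquad := h.dotProduct_mulVec_nonneg (kroneckerVec v w)
  rw [add_mulVec, smul_mulVec, sub_mulVec, maxEntProj_mulVec_kroneckerVec_eq_zero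
    (by rwa [dotProduct_comm]), zero_sub, dotProduct_add, dotProduct_smul, dotProduct_neg,
    star_kroneckerVec_dotProduct_kronecker_mulVec, star_kroneckerVec_dotProduct_kronecker_mulVec,
    star_dotProduct_maxMixed_mulVec, star_dotProduct_maxMixed_mulVec, smul_eq_mul] at hquad
  refine le_of_mul_le_mul_left (a := (n : ℂ)⁻¹ * (star w ⬝ᵥ w)) ?_ hpos
  rw [sub_mulVec, dotProduct_sub, smul_mulVec, dotProduct_smul, star_dotProduct_maxMixed_mulVec,
    smul_eq_mul, mul_zero]
  linear_combination hquad

theorem stmt0 (n : ℕ) (hn : 2 ≤ n) (lam : ℝ) (hlam0 : 0 ≤ lam) (hlam1 : lam ≤ 1)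
    (ρ : Matrix (Fin n) (Fin n) ℂ) (hρ : ρ.PosSemidef) (hρtr : ρ.trace = 1) :
    (ρ ⊗ₖ maxMixed n + (lam : ℂ) • (maxEntProj n - maxMixed n ⊗ₖ maxMixed n)).PosSemidef ↔
      ∃ σ : Matrix (Fin n) (Fin n) ℂ, σ.PosSemidef ∧ σ.trace = 1 ∧
        ρ = (lam : ℂ) • maxMixed n + ((1 - lam : ℝ) : ℂ) • σ := by
  rw [← hρ.posSemidef_sub_smul_iff_exists_eq hρtr (trace_maxMixed (by omega)) hlam1]
  constructor
  · exact posSemidef_sub_smul_maxMixed_of_posSemidef hn hρ.isHermitian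
  · intro h
    have hdecomp : ρ ⊗ₖ maxMixed n + (lam : ℂ) • (maxEntProj n - maxMixed n ⊗ₖ maxMixed n)
        = (ρ - (lam : ℂ) • maxMixed n) ⊗ₖ maxMixed n + (lam : ℂ) • maxEntProj n := by
      ext
      simp only [Matrix.add_apply, Matrix.sub_apply, Matrix.smul_apply, kroneckerMap_apply,
        smul_eq_mul]
      ring
    rw [hdecomp]
    exact (h.kronecker (posSemidef_maxMixed n)).add
      ((posSemidef_maxEntProj n).smul (Complex.zero_le_real.mpr hlam0))
end

section
/- Let σx = [[0,1],[1,0]], σy = [[0,−i],[i,0]], σz = [[1,0],[0,−1]] be the Pauli matrices, let Q₀ = (I₂ − σx − σy − σz)/2, Q_i = σ_i/2 for i ∈ {x,y,z}, and P₀ = I₂, P_i = I₂ + σ_i. For every matrix ρ_SE on ℂ² ⊗ ℂ^m, defining ρ̃_α := tr_S[(P_α ⊗ I_m)·ρ_SE] for α ∈ {0,x,y,z}, one has the one-sided positive decomposition ρ_SE = Σ_α Q_α ⊗ ρ̃_α. Moreover, if ρ_SE is positive semidefinite then each ρ̃_α is positive semidefinite. -/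
open Matrix
open scoped Kronecker ComplexOrder

noncomputable def σx : Matrix (Fin 2) (Fin 2) ℂ := !![0, 1; 1, 0]
noncomputable def σy : Matrix (Fin 2) (Fin 2) ℂ := !![0, -Complex.I; Complex.I, 0]
noncomputable def σz : Matrix (Fin 2) (Fin 2) ℂ := !![1, 0; 0, -1]

/-- The frame `Q₀ = (I − σx − σy − σz)/2`, `Q_i = σ_i/2`. -/
noncomputable def Qfr : Fin 4 → Matrix (Fin 2) (Fin 2) ℂ :=
  ![(2 : ℂ)⁻¹ • (1 - σx - σy - σz), (2 : ℂ)⁻¹ • σx, (2 : ℂ)⁻¹ • σy, (2 : ℂ)⁻¹ • σz]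

/-- The dual frame `P₀ = I`, `P_i = I + σ_i`. -/
noncomputable def Pfr : Fin 4 → Matrix (Fin 2) (Fin 2) ℂ :=
  ![1, 1 + σx, 1 + σy, 1 + σz]

/-- The partial trace over the first (system) factor. -/
noncomputable def ptraceFst (n m : ℕ) (M : Matrix (Fin n × Fin m) (Fin n × Fin m) ℂ) :
    Matrix (Fin m) (Fin m) ℂ :=
  Matrix.of fun e e' => ∑ s : Fin n, M (s, e) (s, e')

lemma ptrace_apply' (m : ℕ) (P : Matrix (Fin 2) (Fin 2) ℂ)
    (ρ : Matrix (Fin 2 × Fin m) (Fin 2 × Fin m) ℂ) (e e' : Fin m) :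
    ptraceFst 2 m ((P ⊗ₖ (1 : Matrix (Fin m) (Fin m) ℂ)) * ρ) e e'
      = ∑ s : Fin 2, ∑ t : Fin 2, P s t * ρ (t, e) (s, e') := by
  simp [ptraceFst, mul_apply, Fintype.sum_prod_type, one_apply, mul_ite, mul_zero,
    Finset.sum_ite_eq, Finset.sum_ite_eq']

/-- The isometry-like factor used to express the partial trace as a sum of congruences. -/
noncomputable def Vmat (m : ℕ) (B : Matrix (Fin 2) (Fin 2) ℂ) (u : Fin 2) :
    Matrix (Fin 2 × Fin m) (Fin m) ℂ :=
  Matrix.of fun p e' => star (B u p.1) * (1 : Matrix (Fin m) (Fin m) ℂ) p.2 e'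

lemma ptrace_eq_sum (m : ℕ) (B : Matrix (Fin 2) (Fin 2) ℂ)
    (ρ : Matrix (Fin 2 × Fin m) (Fin 2 × Fin m) ℂ) :
    ptraceFst 2 m (((Bᴴ * B) ⊗ₖ (1 : Matrix (Fin m) (Fin m) ℂ)) * ρ)
      = ∑ u : Fin 2, (Vmat m B u)ᴴ * ρ * (Vmat m B u) := by
  ext e e'
  simp only [Matrix.sum_apply, ptrace_apply', mul_apply, Vmat, conjTranspose_apply,
    Fintype.sum_prod_type, Matrix.of_apply, one_apply, apply_ite (star : ℂ → ℂ), star_one,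
    star_zero, mul_ite, mul_zero, mul_one, ite_mul, zero_mul, star_mul', star_star,
    Finset.sum_ite_eq, Finset.sum_ite_eq', Finset.mem_univ, if_true]
  rw [Finset.sum_comm]
  simp only [Fin.sum_univ_two, mul_apply]
  ring

noncomputable def Bfac : Fin 4 → Matrix (Fin 2) (Fin 2) ℂ :=
  ![1, !![1, 1; 0, 0], !![1, -Complex.I; 0, 0], !![1, 0; 1, 0]]

lemma Pfr_eq (α : Fin 4) : Pfr α = (Bfac α)ᴴ * Bfac α := by
  fin_cases α <;> ext i j <;> fin_cases i <;> fin_cases j <;>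
    simp [Pfr, Bfac, σx, σy, σz, mul_apply, Fin.sum_univ_two, one_apply] <;> ring_nf

theorem stmt7 (m : ℕ) (ρSE : Matrix (Fin 2 × Fin m) (Fin 2 × Fin m) ℂ) :
    (ρSE = ∑ α : Fin 4,
        Qfr α ⊗ₖ ptraceFst 2 m ((Pfr α ⊗ₖ (1 : Matrix (Fin m) (Fin m) ℂ)) * ρSE)) ∧
    (ρSE.PosSemidef → ∀ α : Fin 4,
        (ptraceFst 2 m ((Pfr α ⊗ₖ (1 : Matrix (Fin m) (Fin m) ℂ)) * ρSE)).PosSemidef) := by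
  constructor
  · ext ⟨a, e⟩ ⟨b, e'⟩
    simp only [Matrix.sum_apply, kroneckerMap_apply, ptrace_apply']
    fin_cases a <;> fin_cases b <;>
      simp [Fin.sum_univ_four, Fin.sum_univ_two, Qfr, Pfr, σx, σy, σz, one_apply] <;>
      ring_nf <;> simp only [Complex.I_sq] <;> ring
  · intro hρ α
    rw [Pfr_eq, ptrace_eq_sum, Fin.sum_univ_two]
    exact (hρ.conjTranspose_mul_mul_same _).add (hρ.conjTranspose_mul_mul_same _)
end

section
/- Let {ξ_j}_{j=0}^{d−1} be an orthonormal basis of ℂ^d, let b_0,…,b_{d−1} be real numbers with Σ_j b_j = 0, and set Δ = Σ_j b_j |ξ_j⟩⟨ξ_j| (a traceless Hermitian matrix). Define, for each pair (j,j'), the traceless jump operators J_{j,j'} = |ξ_j⟩⟨ξ_{j'}| − δ_{jj'} I_d/d. Then for every complex d×d matrix X the Lindblad-form identity holds: Σ_{j,j'} b_j ( J_{j,j'} X J_{j,j'}† − (1/2){ J_{j,j'}† J_{j,j'}, X } ) = (tr X) · Δ, where {A,B} = AB + BA is the anticommutator. -/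
open Matrix

private lemma vmv_mul {d : ℕ} (a b : Fin d → ℂ) (M : Matrix (Fin d) (Fin d) ℂ) :
    vecMulVec a b * M = vecMulVec a (b ᵥ* M) := by
  ext i k
  simp only [Matrix.mul_apply, vecMulVec_apply, Matrix.vecMul, dotProduct, Finset.mul_sum]
  exact Finset.sum_congr rfl fun m _ => by ring

private lemma vmv_vmv {d : ℕ} (a b c e : Fin d → ℂ) :
    vecMulVec a b * vecMulVec c e = (b ⬝ᵥ c) • vecMulVec a e := by
  ext i k
  simp only [Matrix.mul_apply, vecMulVec_apply, Matrix.smul_apply, smul_eq_mul, dotProduct,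
    Finset.sum_mul]
  exact Finset.sum_congr rfl fun m _ => by ring

private lemma vmv_conjT {d : ℕ} (a b : Fin d → ℂ) :
    (vecMulVec a b)ᴴ = vecMulVec (star b) (star a) := by
  ext i k
  simp [conjTranspose_apply, vecMulVec_apply, mul_comm]

private lemma lind_aux {d : ℕ} (Q X : Matrix (Fin d) (Fin d) ℂ) (c τ : ℂ)
    (hQH : Qᴴ = Q) (hQQ : Q * Q = Q) (hQXQ : Q * X * Q = τ • Q) (hc : star c = c) :
    (Q - c • 1) * X * (Q - c • 1)ᴴ -
      (2 : ℂ)⁻¹ • ((Q - c • 1)ᴴ * (Q - c • 1) * X + X * ((Q - c • 1)ᴴ * (Q - c • 1))) =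
    τ • Q - (2 : ℂ)⁻¹ • (Q * X + X * Q) := by
  rw [conjTranspose_sub, hQH, conjTranspose_smul, conjTranspose_one, hc]
  simp only [sub_mul, mul_sub, smul_mul_assoc, mul_smul_comm, one_mul, mul_one, hQQ, hQXQ,
    smul_smul, smul_sub, smul_add]
  module

theorem stmt16 (d : ℕ) (ξ : Fin d → Fin d → ℂ)
    (hortho : ∀ j j' : Fin d, star (ξ j) ⬝ᵥ ξ j' = if j = j' then 1 else 0)
    (b : Fin d → ℝ) (hb : ∑ j, b j = 0)
    (Δ : Matrix (Fin d) (Fin d) ℂ)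
    (hΔ : Δ = ∑ j, (b j : ℂ) • Matrix.vecMulVec (ξ j) (star (ξ j)))
    (J : Fin d → Fin d → Matrix (Fin d) (Fin d) ℂ)
    (hJ : ∀ j j', J j j' =
      Matrix.vecMulVec (ξ j) (star (ξ j')) -
        (if j = j' then (d : ℂ)⁻¹ • (1 : Matrix (Fin d) (Fin d) ℂ) else 0))
    (X : Matrix (Fin d) (Fin d) ℂ) :
    ∑ j : Fin d, ∑ j' : Fin d, (b j : ℂ) •
        (J j j' * X * (J j j')ᴴ -
          (2 : ℂ)⁻¹ • ((J j j')ᴴ * J j j' * X + X * ((J j j')ᴴ * J j j'))) =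
      X.trace • Δ := by
  set P : Fin d → Fin d → Matrix (Fin d) (Fin d) ℂ :=
    fun j j' => vecMulVec (ξ j) (star (ξ j')) with hP
  -- completeness (entrywise)
  have hcompl : ∀ k k' : Fin d, ∑ j, star (ξ j k) * ξ j k' = if k = k' then 1 else 0 := by
    have h1 : (Matrix.of ξ) * (Matrix.of ξ)ᴴ = 1 := by
      ext j j'
      have h := hortho j j'
      simp only [dotProduct, Pi.star_apply] at h
      simp only [Matrix.mul_apply, Matrix.of_apply, conjTranspose_apply, Matrix.one_apply]
      have key : (∑ k, ξ j k * star (ξ j' k)) = star (∑ k, star (ξ j k) * ξ j' k) := by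
        rw [star_sum]
        exact Finset.sum_congr rfl fun k _ => by simp [mul_comm]
      rw [key, h]
      split_ifs <;> simp
    have h2 : (Matrix.of ξ)ᴴ * (Matrix.of ξ) = 1 := mul_eq_one_comm.mp h1
    intro k k'
    have := congrArg (fun M => M k k') h2
    simpa [Matrix.mul_apply, Matrix.one_apply, conjTranspose_apply] using this
  have hcomplM : ∑ j, P j j = (1 : Matrix (Fin d) (Fin d) ℂ) := by
    ext k k'
    simp only [hP, Matrix.sum_apply, vecMulVec_apply, Pi.star_apply, Matrix.one_apply]
    have key : (∑ j, ξ j k * star (ξ j k')) = star (∑ j, star (ξ j k) * ξ j k') := by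
      rw [star_sum]
      exact Finset.sum_congr rfl fun j _ => by simp [mul_comm]
    rw [key, hcompl k k']
    split_ifs <;> simp
  have hPH : ∀ j j', (P j j')ᴴ = P j' j := by
    intro j j'
    rw [hP, vmv_conjT, star_star]
  have hPP : ∀ j j', P j' j * P j j' = P j' j' := by
    intro j j'
    show vecMulVec (ξ j') (star (ξ j)) * vecMulVec (ξ j) (star (ξ j')) =
      vecMulVec (ξ j') (star (ξ j'))
    rw [vmv_vmv, hortho j j, if_pos rfl, one_smul]
  set τ : Fin d → ℂ := fun j' => (star (ξ j') ᵥ* X) ⬝ᵥ ξ j' with hτ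
  have hPXP : ∀ j j', P j j' * X * P j' j = τ j' • P j j := by
    intro j j'
    show vecMulVec (ξ j) (star (ξ j')) * X * vecMulVec (ξ j') (star (ξ j)) =
      τ j' • vecMulVec (ξ j) (star (ξ j))
    rw [vmv_mul, vmv_vmv]
  have key : ∀ j j', J j j' * X * (J j j')ᴴ -
      (2 : ℂ)⁻¹ • ((J j j')ᴴ * J j j' * X + X * ((J j j')ᴴ * J j j')) =
      τ j' • P j j - (2 : ℂ)⁻¹ • (P j' j' * X + X * P j' j') := by
    intro j j'
    rw [hJ j j']
    by_cases h : j = j'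
    · subst h
      rw [if_pos rfl]
      exact lind_aux (P j j) X _ (τ j) (hPH j j) (hPP j j) (hPXP j j) (by simp)
    · rw [if_neg h, sub_zero]
      rw [hPH j j', hPXP j j', hPP j j']
  have htr : ∑ j', τ j' = X.trace := by
    have hτ' : ∀ j', τ j' = ∑ k, ∑ m, X m k * (star (ξ j' m) * ξ j' k) := by
      intro j'
      simp only [hτ, dotProduct, Matrix.vecMul, dotProduct, Pi.star_apply, Finset.sum_mul]
      exact Finset.sum_congr rfl fun k _ => Finset.sum_congr rfl fun m _ => by ring
    calc ∑ j', τ j' = ∑ j', ∑ k, ∑ m, X m k * (star (ξ j' m) * ξ j' k) :=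
          Finset.sum_congr rfl fun j' _ => hτ' j'
      _ = ∑ k, ∑ m, X m k * ∑ j', star (ξ j' m) * ξ j' k := by
          rw [Finset.sum_comm]
          exact Finset.sum_congr rfl fun k _ => by
            rw [Finset.sum_comm]
            exact Finset.sum_congr rfl fun m _ => by rw [Finset.mul_sum]
      _ = ∑ k, ∑ m, X m k * if m = k then 1 else 0 := by
          exact Finset.sum_congr rfl fun k _ => Finset.sum_congr rfl fun m _ => by
            rw [hcompl m k]
      _ = X.trace := by
          simp [Matrix.trace, Matrix.diag, mul_ite]
  have inner : ∀ j, ∑ j', (τ j' • P j j - (2 : ℂ)⁻¹ • (P j' j' * X + X * P j' j')) =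
      X.trace • P j j - X := by
    intro j
    rw [Finset.sum_sub_distrib, ← Finset.sum_smul, htr]
    congr 1
    rw [← Finset.smul_sum, Finset.sum_add_distrib, ← Finset.sum_mul, ← Finset.mul_sum,
      hcomplM, one_mul, mul_one]
    match_scalars
    norm_num
  calc ∑ j : Fin d, ∑ j' : Fin d, (b j : ℂ) •
        (J j j' * X * (J j j')ᴴ -
          (2 : ℂ)⁻¹ • ((J j j')ᴴ * J j j' * X + X * ((J j j')ᴴ * J j j')))
      = ∑ j : Fin d, (b j : ℂ) • (X.trace • P j j - X) := by
        refine Finset.sum_congr rfl fun j _ => ?_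
        rw [← Finset.smul_sum]
        congr 1
        rw [← inner j]
        exact Finset.sum_congr rfl fun j' _ => key j j'
    _ = X.trace • Δ := by
        simp only [smul_sub]
        rw [Finset.sum_sub_distrib, ← Finset.sum_smul]
        have hb' : (∑ j, (b j : ℂ)) = 0 := by
          rw [← Complex.ofReal_sum, hb, Complex.ofReal_zero]
        rw [hb', zero_smul, sub_zero, hΔ, Finset.smul_sum]
        exact Finset.sum_congr rfl fun j _ => smul_comm _ _ _
end

section
/- Let σx, σy, σz be the Pauli matrices, Q₀ = (I₂ − σx − σy − σz)/2, Q_i = σ_i/2, P₀ = I₂, P_i = I₂ + σ_i (i ∈ {x,y,z}). Let ρ_SE be any matrix on ℂ² ⊗ ℂ^m with OPD components ρ̃_α = tr_S[(P_α ⊗ I_m)ρ_SE], and let R be the completely positive map on 2×2 matrices given by Kraus operators K_1,…,K_r, i.e. R[A] = Σ_μ K_μ A K_μ†. Then the system-side repreparation of ρ_SE decomposes through the frame: Σ_μ (K_μ ⊗ I_m) ρ_SE (K_μ† ⊗ I_m) = Σ_{α,α'} R_{α,α'} · Q_{α'} ⊗ ρ̃_α, where R_{α,α'} = tr[R[Q_α]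 P_{α'}]. -/
open Matrix
open scoped Kronecker

lemma key (s s' t a : Fin 2) :
    ∑ α : Fin 4, Qfr α s s' * Pfr α t a = if a = s ∧ t = s' then 1 else 0 := by
  fin_cases s <;> fin_cases s' <;> fin_cases t <;> fin_cases a <;>
    simp [Qfr, Pfr, σx, σy, σz, Fin.sum_univ_four, Matrix.one_apply] <;>
    ring_nf <;> simp [Complex.I_sq] <;> ring_nf

lemma frameA (A : Matrix (Fin 2) (Fin 2) ℂ) :
    ∑ α : Fin 4, (A * Pfr α).trace • Qfr α = A := by
  ext s s'
  simp only [Matrix.sum_apply, Matrix.smul_apply, Matrix.trace, Matrix.diag,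
    Matrix.mul_apply, smul_eq_mul, Finset.sum_mul]
  rw [Finset.sum_comm]
  have h : ∀ i l : Fin 2,
      ∑ α : Fin 4, A i l * Pfr α l i * Qfr α s s'
        = A i l * (if i = s ∧ l = s' then 1 else 0) := by
    intro i l
    rw [← key s s' l i, Finset.mul_sum]
    congr 1; ext α; ring
  have h2 : ∀ i : Fin 2, ∑ α : Fin 4, ∑ l : Fin 2, A i l * Pfr α l i * Qfr α s s'
      = ∑ l : Fin 2, A i l * (if i = s ∧ l = s' then 1 else 0) := by
    intro i
    rw [Finset.sum_comm]
    exact Finset.sum_congr rfl fun l _ => h i l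
  simp only [h2]
  fin_cases s <;> fin_cases s' <;> simp [Fin.sum_univ_two]

lemma reconstruct (m : ℕ) (ρSE : Matrix (Fin 2 × Fin m) (Fin 2 × Fin m) ℂ) :
    ∑ α : Fin 4, Qfr α ⊗ₖ ptraceFst 2 m ((Pfr α ⊗ₖ (1 : Matrix (Fin m) (Fin m) ℂ)) * ρSE)
      = ρSE := by
  ext ⟨s, e⟩ ⟨s', e'⟩
  simp only [Matrix.sum_apply, Matrix.kroneckerMap_apply, ptraceFst, Matrix.of_apply,
    Matrix.mul_apply, Fintype.sum_prod_type, Matrix.one_apply, mul_ite, mul_one, mul_zero,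
    ite_mul, zero_mul, Finset.sum_ite_eq, Finset.mem_univ, if_true]
  have h : ∀ t a : Fin 2, ∑ α : Fin 4, Qfr α s s' * (Pfr α t a * ρSE (a, e) (t, e'))
      = (if a = s ∧ t = s' then 1 else 0) * ρSE (a, e) (t, e') := by
    intro t a
    rw [← key s s' t a, Finset.sum_mul]
    congr 1; ext α; ring
  calc ∑ α : Fin 4, Qfr α s s' * ∑ t : Fin 2, ∑ a : Fin 2, Pfr α t a * ρSE (a, e) (t, e')
      = ∑ t : Fin 2, ∑ a : Fin 2, ∑ α : Fin 4, Qfr α s s' * (Pfr α t a * ρSE (a, e) (t, e')) := by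
        simp_rw [Finset.mul_sum]
        rw [Finset.sum_comm]
        exact Finset.sum_congr rfl fun t _ => Finset.sum_comm
    _ = ∑ t : Fin 2, ∑ a : Fin 2, (if a = s ∧ t = s' then 1 else 0) * ρSE (a, e) (t, e') := by
        simp_rw [h]
    _ = ρSE (s, e) (s', e') := by
        fin_cases s <;> fin_cases s' <;> simp [Fin.sum_univ_two]

lemma sum_kron {ι : Type*} (s : Finset ι) (A : ι → Matrix (Fin 2) (Fin 2) ℂ) {m : ℕ}
    (B : Matrix (Fin m) (Fin m) ℂ) :
    (∑ i ∈ s, A i) ⊗ₖ B = ∑ i ∈ s, A i ⊗ₖ B := by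
  ext ⟨a, b⟩ ⟨c, d⟩
  simp [Matrix.sum_apply, Finset.sum_mul]

theorem stmt18 (m : ℕ) (ρSE : Matrix (Fin 2 × Fin m) (Fin 2 × Fin m) ℂ)
    (r : ℕ) (K : Fin r → Matrix (Fin 2) (Fin 2) ℂ) :
    ∑ μ : Fin r, (K μ ⊗ₖ (1 : Matrix (Fin m) (Fin m) ℂ)) * ρSE *
        ((K μ)ᴴ ⊗ₖ (1 : Matrix (Fin m) (Fin m) ℂ)) =
      ∑ α : Fin 4, ∑ α' : Fin 4,
        ((∑ μ : Fin r, K μ * Qfr α * (K μ)ᴴ) * Pfr α').trace •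
          (Qfr α' ⊗ₖ ptraceFst 2 m ((Pfr α ⊗ₖ (1 : Matrix (Fin m) (Fin m) ℂ)) * ρSE)) := by
  symm
  calc ∑ α : Fin 4, ∑ α' : Fin 4,
        ((∑ μ : Fin r, K μ * Qfr α * (K μ)ᴴ) * Pfr α').trace •
          (Qfr α' ⊗ₖ ptraceFst 2 m ((Pfr α ⊗ₖ (1 : Matrix (Fin m) (Fin m) ℂ)) * ρSE))
      = ∑ α : Fin 4, (∑ μ : Fin r, K μ * Qfr α * (K μ)ᴴ) ⊗ₖ
          ptraceFst 2 m ((Pfr α ⊗ₖ (1 : Matrix (Fin m) (Fin m) ℂ)) * ρSE) := by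
        refine Finset.sum_congr rfl fun α _ => ?_
        conv_rhs => rw [← frameA (∑ μ : Fin r, K μ * Qfr α * (K μ)ᴴ)]
        rw [sum_kron]
        refine Finset.sum_congr rfl fun α' _ => ?_
        rw [Matrix.smul_kronecker]
    _ = ∑ μ : Fin r, (K μ ⊗ₖ (1 : Matrix (Fin m) (Fin m) ℂ)) *
          (∑ α : Fin 4, Qfr α ⊗ₖ ptraceFst 2 m ((Pfr α ⊗ₖ (1 : Matrix (Fin m) (Fin m) ℂ)) * ρSE)) *
          ((K μ)ᴴ ⊗ₖ (1 : Matrix (Fin m) (Fin m) ℂ)) := by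
        simp_rw [sum_kron]
        rw [Finset.sum_comm]
        refine Finset.sum_congr rfl fun μ _ => ?_
        rw [Finset.mul_sum, Finset.sum_mul]
        refine Finset.sum_congr rfl fun α _ => ?_
        rw [← Matrix.mul_kronecker_mul, ← Matrix.mul_kronecker_mul, Matrix.one_mul, Matrix.mul_one]
    _ = ∑ μ : Fin r, (K μ ⊗ₖ (1 : Matrix (Fin m) (Fin m) ℂ)) * ρSE *
          ((K μ)ᴴ ⊗ₖ (1 : Matrix (Fin m) (Fin m) ℂ)) := by
        rw [reconstruct]
end
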